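/- Fix a finite set Val with v = |Val| ≥ 2, natural numbers ℓ < u with u ≥ 1, a finite set Z with |Z| = v^ℓ, and ε > 0. Let M : Val^u → Z → ℝ be a channel matrix satisfying ε-differential privacy with respect to the Hamming adjacency on Val^u. Then there exists a square channel matrix M' : Val^ℓ → Val^ℓ → ℝ such that: (i) M' i j ≤ exp(ε · (u − ℓ + hammingDist(i, h))) · M' h j for all i, h ∈ Val^ℓ and all j ∈ Val^ℓ; (ii) for every i ∈ Val^ℓ, M' i i equals the maximum entry of M'; (iii) ∑_{j ∈ Val^ℓ} max_{i ∈ Val^ℓ} M' i j = ∑_{z ∈ Z} max_{x ∈ Val^u} M x z (so under uniform input distributions M' has the same a posteriori min-entropy as M). -/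

import Mathlib

/-!
Put `q = exp (-ε)`, `r = q ^ (u - ℓ)`, `N = v ^ ℓ` and `T = (1 + (v - 1) q) ^ ℓ`, and let `x_z`
maximize column `z` of `M`, so that `S = ∑ z, m_z` with `m_z = M x_z z`. Privacy along Hamming
paths gives `M x z ≥ q ^ d(x, x_z) m_z`, and `d(x_z, x_z') ≤ (u - ℓ) + d(h_z, h_z')` for the
length-`ℓ` prefixes `h_z`; since row `x_z` has mass one,
`(1 - r) m_z + r ∑ z', q ^ d(h_z, h_z') m_z' ≤ 1`.
Multiplying by `m_z` and summing, two Cauchy–Schwarz bounds give `(1 + r (T - 1)) S ≤ N`: one for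
`∑ m_z ^ 2`, and one for the quadratic form of the kernel `q ^ d` on `Val ^ ℓ`, which is a mixture
of the kernels "agree on the coordinates in `A`" with weights `(1 - q) ^ |A| q ^ (ℓ - |A|)`.
The kernel `q ^ (d(i, j) + (u - ℓ) [i ≠ j])` has unit diagonal, row sums `G = 1 + r (T - 1)`, and
satisfies the required privacy bound by the triangle inequality; mixing its normalization with
the uniform channel in proportion `θ : 1 - θ` gives vulnerability `θ (N / G - 1) + 1`, and this is
`S` for some `θ ∈ [0, 1]` precisely because `1 ≤ S ≤ N / G`.
-/

def hammingGraph (u : ℕ) (Val : Type*) [DecidableEq Val] :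
    SimpleGraph (Fin u → Val) where
  Adj x y := hammingDist x y = 1
  symm := by
    refine ⟨fun x y h => ?_⟩
    rwa [hammingDist_comm]
  loopless := by
    refine ⟨fun x h => ?_⟩
    simp [hammingDist_self] at h

open Finset

theorem ciSup_eq_apply_of_forall_le {ι β : Type*} [Finite ι] [ConditionallyCompleteLattice β]
    {f : ι → β} {i₀ : ι} (h : ∀ i, f i ≤ f i₀) : ⨆ i, f i = f i₀ :=
  have : Nonempty ι := ⟨i₀⟩
  le_antisymm (ciSup_le h) (le_ciSup (Finite.bddAbove_range f) i₀)

theorem exp_neg_pow_mul_le_iff {ε a b : ℝ} (n : ℕ) :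
    Real.exp (-ε) ^ n * a ≤ b ↔ a ≤ Real.exp (ε * n) * b := by
  rw [← Real.exp_nat_mul, show (n : ℝ) * -ε = -(ε * n) by ring, Real.exp_neg,
    inv_mul_le_iff₀ (Real.exp_pos _)]

theorem exists_mul_sub_one_eq {a S : ℝ} (hS1 : 1 ≤ S) (hSa : S ≤ a) :
    ∃ θ, 0 ≤ θ ∧ θ ≤ 1 ∧ θ * (a - 1) = S - 1 :=
  -- when `a = 1` this is `θ = 0 / 0 = 0`, and then `S = 1`
  ⟨(S - 1) / (a - 1), div_nonneg (by linarith) (by linarith),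
    div_le_one_of_le₀ (by linarith) (by linarith), div_mul_cancel_of_imp fun _ => by linarith⟩

section HammingPath

variable {ι α : Type*} [Fintype ι] [DecidableEq ι] [DecidableEq α]

theorem hammingDist_update_of_ne {x : ι → α} {k : ι} {b : α} (h : x k ≠ b) :
    hammingDist x (Function.update x k b) = 1 := by
  rw [hammingDist, card_eq_one]
  refine ⟨k, ?_⟩
  ext i
  by_cases hi : i = k <;> simp [hi, h]

theorem hammingDist_update_add_one {x y : ι → α} {k : ι} (h : x k ≠ y k) :
    hammingDist (Function.update x k (y k)) y + 1 = hammingDist x y := by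
  have hfilter : ({i | Function.update x k (y k) i ≠ y i} : Finset ι) =
      ({i | x i ≠ y i} : Finset ι).erase k := by
    ext i
    by_cases hi : i = k <;> simp [hi, h]
  rw [hammingDist, hfilter, card_erase_add_one (by simp [h]), hammingDist]

theorem pow_hammingDist_mul_le_of_adj {f : (ι → α) → ℝ} {q : ℝ} (hq : 0 ≤ q)
    (hf : ∀ x x', hammingDist x x' = 1 → q * f x ≤ f x') (x y : ι → α) :
    q ^ hammingDist x y * f x ≤ f y := by
  induction hxy : hammingDist x y generalizing x with
  | zero => rw [hammingDist_eq_zero.1 hxy, pow_zero, one_mul]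
  | succ n ih =>
    obtain ⟨k, hk⟩ : ∃ k, x k ≠ y k := Function.ne_iff.1 (hammingDist_pos.1 (by omega))
    calc q ^ (n + 1) * f x = q ^ n * (q * f x) := by ring
      _ ≤ q ^ n * f (Function.update x k (y k)) := by
          gcongr
          exact hf _ _ (hammingDist_update_of_ne hk)
      _ ≤ f y := ih _ (by have := hammingDist_update_add_one hk; omega)

theorem hammingDist_le_card_sub_add_hammingDist_comp {κ : Type*} [Fintype κ] (e : κ ↪ ι)
    (x y : ι → α) :
    hammingDist x y ≤ (Fintype.card ι - Fintype.card κ) + hammingDist (x ∘ e) (y ∘ e) := by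
  have hsub : ({i | x i ≠ y i} : Finset ι) ⊆
      (univ.map e)ᶜ ∪ ({j | x (e j) ≠ y (e j)} : Finset κ).map e := by
    intro i hi
    by_cases h : i ∈ univ.map e
    · obtain ⟨j, -, rfl⟩ := mem_map.1 h
      simpa using hi
    · simp [h]
  calc hammingDist x y ≤ #((univ.map e)ᶜ ∪ ({j | x (e j) ≠ y (e j)} : Finset κ).map e) :=
        card_le_card hsub
    _ ≤ #(univ.map e)ᶜ + #(({j | x (e j) ≠ y (e j)} : Finset κ).map e) := card_union_le _ _
    _ = _ := by rw [card_compl, card_map, card_map, card_univ]; rfl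

end HammingPath

section HammingKernel

variable {ι α : Type*} [Fintype ι] [DecidableEq α]

theorem pow_hammingDist_eq_prod {R : Type*} [CommMonoid R] (q : R) (s t : ι → α) :
    q ^ hammingDist s t = ∏ i, if s i = t i then 1 else q := by
  rw [prod_ite, prod_const_one, one_mul, prod_const]
  rfl

theorem sum_pow_hammingDist [DecidableEq ι] [Fintype α] {R : Type*} [CommRing R] (q : R)
    (s : ι → α) :
    ∑ t, q ^ hammingDist s t = (1 + (Fintype.card α - 1) * q) ^ Fintype.card ι := by
  have hcoord : ∀ i, ∑ a, (if s i = a then 1 else q) = 1 + (Fintype.card α - 1) * q := by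
    intro i
    have hsplit : ∀ a, (if s i = a then 1 else q) = (if s i = a then 1 - q else 0) + q := by
      intro a; split_ifs <;> ring
    simp only [hsplit, sum_add_distrib, sum_ite_eq, mem_univ, if_true, sum_const, card_univ,
      nsmul_eq_mul]
    ring
  simp_rw [pow_hammingDist_eq_prod]
  rw [← Fintype.prod_sum (fun i a => if s i = a then (1 : R) else q)]
  simp only [hcoord, prod_const, card_univ]

theorem pow_hammingDist_eq_sum_finset {R : Type*} [CommRing R] (q : R) (s t : ι → α) :
    q ^ hammingDist s t = ∑ A : Finset ι,
      (1 - q) ^ #A * q ^ (Fintype.card ι - #A) * if A.restrict s = A.restrict t then 1 else 0 := by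
  classical
  have hsplit : ∀ i, (if s i = t i then 1 else q) = (if s i = t i then 1 - q else 0) + q := by
    intro i; split_ifs <;> ring
  rw [pow_hammingDist_eq_prod, prod_congr rfl fun i _ => hsplit i, Fintype.prod_add]
  refine sum_congr rfl fun A _ => ?_
  rw [prod_ite_zero, prod_const, prod_const, card_compl]
  have hres : A.restrict s = A.restrict t ↔ ∀ i ∈ A, s i = t i := by
    simp [funext_iff, Finset.restrict]
  by_cases h : ∀ i ∈ A, s i = t i <;> simp [h, hres]

theorem sq_sum_le_card_mul_sum_sum_ite_eq {X Y : Type*} [Fintype X] [Fintype Y] [DecidableEq Y]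
    (π : X → Y) (y : X → ℝ) :
    (∑ x, y x) ^ 2 ≤ Fintype.card Y * ∑ x, ∑ x', if π x = π x' then y x * y x' else 0 := by
  set f : Y → ℝ := fun b => ∑ x with π x = b, y x
  have hsum : ∑ x, y x = ∑ b, f b := (sum_fiberwise univ π y).symm
  have hsq : ∑ x, ∑ x', (if π x = π x' then y x * y x' else 0) = ∑ b, f b ^ 2 := by
    calc ∑ x, ∑ x', (if π x = π x' then y x * y x' else 0) = ∑ x, y x * f (π x) := by
          refine sum_congr rfl fun x _ => ?_
          rw [mul_sum, sum_filter]
          exact sum_congr rfl fun x' _ => if_congr eq_comm rfl rfl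
      _ = ∑ b, ∑ x with π x = b, y x * f b := by
          rw [← sum_fiberwise univ π]
          exact sum_congr rfl fun b _ => sum_congr rfl fun x hx => by rw [(mem_filter.1 hx).2]
      _ = ∑ b, f b ^ 2 := by simp only [← sum_mul, sq, f]
  rw [hsum, hsq, ← card_univ]
  exact sq_sum_le_card_mul_sum_sq

theorem mul_sq_sum_le_mul_sum_sum_pow_hammingDist [Fintype α] {X : Type*} [Fintype X]
    (H : X → ι → α) {q : ℝ} (hq0 : 0 ≤ q) (hq1 : q ≤ 1) (y : X → ℝ) :
    (1 + (Fintype.card α - 1) * q) ^ Fintype.card ι * (∑ x, y x) ^ 2 ≤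
      Fintype.card α ^ Fintype.card ι *
        ∑ x, ∑ x', q ^ hammingDist (H x) (H x') * (y x * y x') := by
  classical
  set v : ℝ := (Fintype.card α : ℝ)
  set n := Fintype.card ι
  set Q : Finset ι → ℝ := fun A =>
    ∑ x, ∑ x', if A.restrict (H x) = A.restrict (H x') then y x * y x' else 0
  have hexpand : ∑ x, ∑ x', q ^ hammingDist (H x) (H x') * (y x * y x') =
      ∑ A : Finset ι, (1 - q) ^ #A * q ^ (n - #A) * Q A := by
    simp only [pow_hammingDist_eq_sum_finset q, sum_mul, Q, mul_sum, mul_ite, mul_one, mul_zero,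
      ite_mul, zero_mul]
    exact (sum_congr rfl fun x _ => sum_comm).trans sum_comm
  have hfiber : ∀ A : Finset ι, (∑ x, y x) ^ 2 ≤ v ^ #A * Q A := fun A => by
    simpa [v, Fintype.card_fun] using
      sq_sum_le_card_mul_sum_sum_ite_eq (fun x => A.restrict (H x)) y
  have hq1' : 0 ≤ 1 - q := by linarith
  calc (1 + (v - 1) * q) ^ n * (∑ x, y x) ^ 2
      = ∑ A : Finset ι, (1 - q) ^ #A * (v * q) ^ (n - #A) * (∑ x, y x) ^ 2 := by
        rw [show 1 + (v - 1) * q = (1 - q) + v * q by ring, ← Fintype.sum_pow_mul_eq_add_pow,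
          sum_mul]
    _ ≤ ∑ A : Finset ι, (1 - q) ^ #A * (v * q) ^ (n - #A) * (v ^ #A * Q A) := by
        gcongr with A
        exact hfiber A
    _ = v ^ n * ∑ A : Finset ι, (1 - q) ^ #A * q ^ (n - #A) * Q A := by
        rw [mul_sum]
        refine sum_congr rfl fun A _ => ?_
        have hn : v ^ n = v ^ #A * v ^ (n - #A) := by
          rw [← pow_add, Nat.add_sub_cancel' (card_le_univ A)]
        rw [mul_pow, hn]
        ring
    _ = _ := by rw [hexpand]

end HammingKernel

theorem one_sub_pow_mul_add_pow_mul_sum_le_one {ι κ α Z : Type*} [Fintype ι] [Fintype κ]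
    [DecidableEq α] [Fintype Z] (M : (ι → α) → Z → ℝ)
    (hnn : ∀ x z, 0 ≤ M x z) (hrow : ∀ x, ∑ z, M x z = 1) {q : ℝ} (hq0 : 0 ≤ q) (hq1 : q ≤ 1)
    (hlip : ∀ x y z, q ^ hammingDist x y * M x z ≤ M y z) (proj : (ι → α) → κ → α) {c : ℕ}
    (hproj : ∀ x y, hammingDist x y ≤ c + hammingDist (proj x) (proj y))
    (xs : Z → ι → α) (z : Z) :
    (1 - q ^ c) * M (xs z) z +
      q ^ c * ∑ z', q ^ hammingDist (proj (xs z)) (proj (xs z')) * M (xs z') z' ≤ 1 := by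
  set f : Z → ℝ := fun z' => q ^ c * (q ^ hammingDist (proj (xs z)) (proj (xs z')) * M (xs z') z')
  have hf : ∀ z', f z' ≤ M (xs z) z' := fun z' => calc
    f z' = q ^ (c + hammingDist (proj (xs z')) (proj (xs z))) * M (xs z') z' := by
        rw [pow_add, hammingDist_comm]; ring
    _ ≤ q ^ hammingDist (xs z') (xs z) * M (xs z') z' := by
        exact mul_le_mul_of_nonneg_right (pow_le_pow_of_le_one hq0 hq1 (hproj _ _)) (hnn _ _)
    _ ≤ M (xs z) z' := hlip _ _ _
  have hfz : f z = q ^ c * M (xs z) z := by simp [f, hammingDist_self]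
  calc (1 - q ^ c) * M (xs z) z +
        q ^ c * ∑ z', q ^ hammingDist (proj (xs z)) (proj (xs z')) * M (xs z') z'
      = (M (xs z) z - f z) + ∑ z', f z' := by rw [hfz, mul_sum]; ring
    _ ≤ ∑ z', (M (xs z) z' - f z') + ∑ z', f z' := by
        gcongr
        exact single_le_sum (fun z' _ => sub_nonneg.2 (hf z')) (mem_univ z)
    _ = 1 := by rw [sum_sub_distrib, sub_add_cancel, hrow]

theorem mul_sum_le_card_pow_of_forall_le_one {ι α Z : Type*} [Fintype ι] [Fintype α]
    [DecidableEq α] [Fintype Z]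
    (hZ : Fintype.card Z ≤ Fintype.card α ^ Fintype.card ι) (H : Z → ι → α) {q r : ℝ}
    (hq0 : 0 ≤ q) (hq1 : q ≤ 1) (hr0 : 0 ≤ r) (hr1 : r ≤ 1) {m : Z → ℝ} (hm : ∀ z, 0 ≤ m z)
    (h : ∀ z, (1 - r) * m z + r * ∑ z', q ^ hammingDist (H z) (H z') * m z' ≤ 1) :
    (1 + r * ((1 + (Fintype.card α - 1) * q) ^ Fintype.card ι - 1)) * ∑ z, m z ≤
      Fintype.card α ^ Fintype.card ι := by
  set S := ∑ z, m z
  set N : ℝ := (Fintype.card α : ℝ) ^ Fintype.card ι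
  set T := (1 + ((Fintype.card α : ℝ) - 1) * q) ^ Fintype.card ι
  set Q := ∑ z, ∑ z', q ^ hammingDist (H z) (H z') * (m z * m z')
  have hsummed : (1 - r) * ∑ z, m z ^ 2 + r * Q ≤ S := calc
    (1 - r) * ∑ z, m z ^ 2 + r * Q
        = ∑ z, m z * ((1 - r) * m z + r * ∑ z', q ^ hammingDist (H z) (H z') * m z') := by
          simp only [Q, mul_sum, ← sum_add_distrib]
          refine sum_congr rfl fun z _ => ?_
          rw [mul_add, mul_sum, sq]
          congr 1
          · ring
          · exact sum_congr rfl fun z' _ => by ring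
    _ ≤ ∑ z, m z * 1 := by gcongr with z; exacts [hm z, h z]
    _ = S := by simp [S]
  have hquad : T * S ^ 2 ≤ N * Q := mul_sq_sum_le_mul_sum_sum_pow_hammingDist H hq0 hq1 m
  have hcs : S ^ 2 ≤ N * ∑ z, m z ^ 2 := by
    refine sq_sum_le_card_mul_sum_sq.trans ?_
    rw [card_univ]
    gcongr
    simp only [N]
    exact_mod_cast hZ
  have hS0 : 0 ≤ S := sum_nonneg fun z _ => hm z
  have hsq : (1 + r * (T - 1)) * S * S ≤ N * S := by
    have h1 := mul_le_mul_of_nonneg_left hcs (sub_nonneg.2 hr1)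
    have h2 := mul_le_mul_of_nonneg_left hquad hr0
    have h3 := mul_le_mul_of_nonneg_left hsummed (by positivity : 0 ≤ N)
    linarith
  rcases hS0.eq_or_lt with hS | hS
  · rw [← hS, mul_zero]; positivity
  · exact le_of_mul_le_mul_right hsq hS

section Kernel

variable {ι α : Type*} [Fintype ι] [DecidableEq α]

def hammingKernel (q : ℝ) (c : ℕ) (i j : ι → α) : ℝ :=
  q ^ (hammingDist i j + if i = j then 0 else c)

variable {q : ℝ} {c : ℕ}

@[simp]
theorem hammingKernel_self (i : ι → α) : hammingKernel q c i i = 1 := by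
  simp [hammingKernel]

theorem hammingKernel_nonneg (hq0 : 0 ≤ q) (i j : ι → α) : 0 ≤ hammingKernel q c i j :=
  pow_nonneg hq0 _

theorem hammingKernel_le_one (hq0 : 0 ≤ q) (hq1 : q ≤ 1) (i j : ι → α) :
    hammingKernel q c i j ≤ 1 :=
  pow_le_one₀ hq0 hq1

theorem sum_hammingKernel [DecidableEq ι] [Fintype α] (i : ι → α) :
    ∑ j, hammingKernel q c i j =
      1 + q ^ c * ((1 + (Fintype.card α - 1) * q) ^ Fintype.card ι - 1) := by
  have hsplit : ∀ j, hammingKernel q c i j =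
      q ^ c * q ^ hammingDist i j + if i = j then 1 - q ^ c else 0 := by
    intro j
    by_cases h : i = j
    · simp [h, hammingKernel]
    · simp [h, hammingKernel, pow_add, mul_comm]
  simp only [hsplit, sum_add_distrib, ← mul_sum, sum_pow_hammingDist, sum_ite_eq, mem_univ,
    if_true]
  ring

theorem pow_mul_hammingKernel_le (hq0 : 0 ≤ q) (hq1 : q ≤ 1) (i h j : ι → α) :
    q ^ (c + hammingDist i h) * hammingKernel q c i j ≤ hammingKernel q c h j := by
  rw [hammingKernel, hammingKernel, ← pow_add]
  refine pow_le_pow_of_le_one hq0 hq1 ?_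
  have htri := hammingDist_triangle h i j
  rw [hammingDist_comm h i] at htri
  split_ifs <;> omega

theorem exists_channel_sum_ciSup_eq [DecidableEq ι] [Fintype α] [Nonempty α] (hq0 : 0 ≤ q)
    (hq1 : q ≤ 1) (c : ℕ) {S : ℝ} (hS1 : 1 ≤ S)
    (hS : (1 + q ^ c * ((1 + (Fintype.card α - 1) * q) ^ Fintype.card ι - 1)) * S ≤
      Fintype.card α ^ Fintype.card ι) :
    ∃ M' : (ι → α) → (ι → α) → ℝ, (∀ i j, 0 ≤ M' i j) ∧ (∀ i, ∑ j, M' i j = 1) ∧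
      (∀ i h j, q ^ (c + hammingDist i h) * M' i j ≤ M' h j) ∧ (∀ i h j, M' h j ≤ M' i i) ∧
      ∑ j, ⨆ i, M' i j = S := by
  set G := 1 + q ^ c * ((1 + (Fintype.card α - 1) * q) ^ Fintype.card ι - 1)
  set N : ℝ := (Fintype.card α : ℝ) ^ Fintype.card ι
  have hv : (1 : ℝ) ≤ Fintype.card α := by exact_mod_cast Fintype.card_pos
  have hG1 : 1 ≤ G := by
    have : 1 ≤ (1 + (Fintype.card α - 1) * q) ^ Fintype.card ι :=
      one_le_pow₀ (by nlinarith)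
    have : 0 ≤ q ^ c := pow_nonneg hq0 c
    nlinarith
  have hSG : S ≤ N / G := by rw [le_div_iff₀ (by linarith)]; linarith
  have hN : (Fintype.card (ι → α) : ℝ) = N := by simp [N]
  have hN0 : N ≠ 0 := by positivity
  have hG0 : G ≠ 0 := by positivity
  obtain ⟨θ, hθ0, hθ1, hθ⟩ := exists_mul_sub_one_eq hS1 hSG
  set M' : (ι → α) → (ι → α) → ℝ := fun i j => θ / G * hammingKernel q c i j + (1 - θ) / N
  have hdiag : ∀ i h j, M' h j ≤ M' i i := fun i h j => by
    simp only [M', hammingKernel_self]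
    gcongr
    exact hammingKernel_le_one hq0 hq1 h j
  refine ⟨M', fun i j => ?_, fun i => ?_, fun i h j => ?_, hdiag, ?_⟩
  · have := hammingKernel_nonneg (c := c) hq0 i j
    positivity
  · rw [sum_add_distrib, ← mul_sum, show ∑ j, hammingKernel q c i j = G from sum_hammingKernel i,
      sum_const, card_univ, nsmul_eq_mul, hN]
    field_simp
    ring
  · have ht0 : 0 ≤ q ^ (c + hammingDist i h) := pow_nonneg hq0 _
    calc q ^ (c + hammingDist i h) * M' i j
        = θ / G * (q ^ (c + hammingDist i h) * hammingKernel q c i j) +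
            q ^ (c + hammingDist i h) * ((1 - θ) / N) := by ring
      _ ≤ θ / G * hammingKernel q c h j + (1 - θ) / N := by
          refine add_le_add (by gcongr; exact pow_mul_hammingKernel_le hq0 hq1 i h j) ?_
          exact mul_le_of_le_one_left (div_nonneg (by linarith) (by positivity))
            (pow_le_one₀ hq0 hq1)
  · rw [sum_congr rfl fun j _ => ciSup_eq_apply_of_forall_le fun i => hdiag j i j]
    simp only [M', hammingKernel_self, mul_one, sum_const, card_univ, nsmul_eq_mul, hN]
    calc N * (θ / G + (1 - θ) / N) = θ * (N / G - 1) + 1 := by field_simp; ring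
      _ = S := by rw [hθ]; ring

end Kernel

theorem dp_restricted_range_transform_general
    (Val : Type*) [Fintype Val] [DecidableEq Val]
    (hv : 2 ≤ Fintype.card Val) (ℓ u : ℕ) (hℓu : ℓ < u)
    {Z : Type*} [Fintype Z] (hZ : Fintype.card Z = Fintype.card Val ^ ℓ)
    (ε : ℝ) (hε : 0 < ε) (M : (Fin u → Val) → Z → ℝ)
    (hnn : ∀ x z, 0 ≤ M x z) (hrow : ∀ x, ∑ z, M x z = 1)
    (hdp : ∀ x x', (hammingGraph u Val).Adj x x' → ∀ z, M x z ≤ Real.exp ε * M x' z) :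
    ∃ M' : (Fin ℓ → Val) → (Fin ℓ → Val) → ℝ,
      (∀ i j, 0 ≤ M' i j) ∧
      (∀ i, ∑ j, M' i j = 1) ∧
      (∀ i h j : Fin ℓ → Val,
        M' i j ≤ Real.exp (ε * ((u - ℓ : ℕ) + (hammingDist i h : ℝ))) * M' h j) ∧
      (∀ i h j : Fin ℓ → Val, M' h j ≤ M' i i) ∧
      (∑ j, ⨆ i, M' i j) = (∑ z, ⨆ x, M x z) := by
  have : Nonempty Val := Fintype.card_pos_iff.1 (by omega)
  set q := Real.exp (-ε)
  have hq0 : 0 ≤ q := (Real.exp_pos _).le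
  have hq1 : q ≤ 1 := Real.exp_le_one_iff.2 (by linarith)
  have hlip : ∀ x y z, q ^ hammingDist x y * M x z ≤ M y z := fun x y z =>
    pow_hammingDist_mul_le_of_adj hq0 (fun x x' hxx' => by
      simpa using (exp_neg_pow_mul_le_iff 1).2 (by simpa using hdp x x' hxx' z)) x y
  choose xs hxs using fun z => Finite.exists_max (M · z)
  set e : Fin ℓ ↪ Fin u := Fin.castLEEmb hℓu.le
  have hproj : ∀ x y : Fin u → Val, hammingDist x y ≤ (u - ℓ) + hammingDist (x ∘ e) (y ∘ e) := by
    simpa using hammingDist_le_card_sub_add_hammingDist_comp (α := Val) e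
  have hrowz := one_sub_pow_mul_add_pow_mul_sum_le_one M hnn hrow hq0 hq1 hlip _ hproj xs
  have hvuln := mul_sum_le_card_pow_of_forall_le_one (by simp [hZ]) (fun z => xs z ∘ e) hq0 hq1
    (pow_nonneg hq0 _) (pow_le_one₀ hq0 hq1) (fun z => hnn _ _) hrowz
  have hS1 : 1 ≤ ∑ z, M (xs z) z :=
    (hrow fun _ => Classical.arbitrary Val).symm.le.trans (sum_le_sum fun z _ => hxs z _)
  obtain ⟨M', hM'nn, hM'row, hM'dp, hM'diag, hM'vuln⟩ :=
    exists_channel_sum_ciSup_eq (ι := Fin ℓ) (α := Val) hq0 hq1 (u - ℓ) hS1 (by simpa using hvuln)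
  refine ⟨M', hM'nn, hM'row, fun i h j => ?_, hM'diag, ?_⟩
  · exact_mod_cast (exp_neg_pow_mul_le_iff _).1 (hM'dp i h j)
  · rw [hM'vuln]
    exact sum_congr rfl fun z _ => (ciSup_eq_apply_of_forall_le (hxs z)).symm

/-- Let `M` be a channel matrix on `Val^u × Z` with `|Z| = v^ℓ`,
`ℓ < u`, satisfying `ε`-differential privacy with respect to the Hamming adjacency on
`Val^u`. Then there is a square channel matrix `M'` on `Val^ℓ × Val^ℓ` such that
(i) `M' i j ≤ exp (ε (u - ℓ + hammingDist i h)) * M' h j` for all `i, h, j`;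
(ii) every diagonal entry `M' i i` equals the maximum entry of `M'`; and
(iii) `∑_j max_i M' i j = ∑_z max_x M x z`, so under uniform input distributions `M'`
has the same a posteriori min-entropy as `M`. -/
theorem dp_restricted_range_transform
    (Val : Type*) [Fintype Val] [DecidableEq Val]
    (hv : 2 ≤ Fintype.card Val) (ℓ u : ℕ) (hℓu : ℓ < u) (hu : 1 ≤ u)
    {Z : Type*} [Fintype Z] (hZ : Fintype.card Z = Fintype.card Val ^ ℓ)
    (ε : ℝ) (hε : 0 < ε) (M : (Fin u → Val) → Z → ℝ)
    (hnn : ∀ x z, 0 ≤ M x z) (hrow : ∀ x, ∑ z, M x z = 1)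
    (hdp : ∀ x x', (hammingGraph u Val).Adj x x' → ∀ z, M x z ≤ Real.exp ε * M x' z) :
    ∃ M' : (Fin ℓ → Val) → (Fin ℓ → Val) → ℝ,
      (∀ i j, 0 ≤ M' i j) ∧
      (∀ i, ∑ j, M' i j = 1) ∧
      (∀ i h j : Fin ℓ → Val,
        M' i j ≤ Real.exp (ε * ((u - ℓ : ℕ) + (hammingDist i h : ℝ))) * M' h j) ∧
      (∀ i h j : Fin ℓ → Val, M' h j ≤ M' i i) ∧
      (∑ j, ⨆ i, M' i j) = (∑ z, ⨆ x, M x z) :=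
  dp_restricted_range_transform_general Val hv ℓ u hℓu hZ ε hε M hnn hrow hdp
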